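/- Let P be a large-tree forcing notion, ⟨T,T'⟩ ∈ P×_{E0}P, n < ω, and s, t ∈ 2^n. Then ⟨T→s, T'→t⟩ ∈ P×_{E0}P. -/

import Mathlib

namespace E0L

/-- Finite binary strings `2^{<ω}`. -/
abbrev Str : Type := List Bool

/-- Sets of binary strings (in particular, trees). -/
abbrev Tr : Type := Set Str

/-- The action `s·t` of a string on a string:
`(s·t)(k) = t(k) + s(k) mod 2` for `k < min(|s|,|t|)` and `(s·t)(k) = t(k)` otherwise. -/
def act (s t : Str) : Str := List.ofFn fun k : Fin t.length => Bool.xor (s.getD k false) (t.get k)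

/-- The action `s·T` of a string on a set of strings. -/
def actT (s : Str) (T : Tr) : Tr := (act s) '' T

/-- `T ↾ s = {t ∈ T : s ⊆ t or t ⊆ s}`. -/
def restr (T : Tr) (s : Str) : Tr := {t ∈ T | s <+: t ∨ t <+: s}

/-- `[T]`, the set of infinite branches of `T` (as elements of Cantor space `2^ω`). -/
def branches (T : Tr) : Set (ℕ → Bool) := {x | ∀ n : ℕ, (List.ofFn fun k : Fin n => x k) ∈ T}

/-- `T[s] = {t : s ⊆ t or t ⊂ s}`. -/
def Tbr (s : Str) : Tr := {t | s <+: t ∨ (t <+: s ∧ t ≠ s)}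

/-- `LTwit T r q` : the strings `q i n` witness that `T` is an E0-large tree with stem `r`:
`|q^0_n| = |q^1_n| ≥ 1`, `q^i_n(0) = i`, and `T` consists of all initial segments of strings
of the form `r⌢q^{i(0)}_0⌢…⌢q^{i(n)}_n`. -/
def LTwit (T : Tr) (r : Str) (q : ℕ → Bool → Str) : Prop :=
  (∀ n : ℕ, (q n true).length = (q n false).length ∧ 1 ≤ (q n false).length) ∧
  (∀ n : ℕ, ∀ i : Bool, (q n i).head? = some i) ∧
  T = {t | ∃ n : ℕ, ∃ f : ℕ → Bool,
        t <+: r ++ ((List.range (n+1)).map (fun k => q k (f k))).flatten}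

/-- `T` is an E0-large tree (`T ∈ LT`). -/
def IsLT (T : Tr) : Prop := ∃ r q, LTwit T r q

/-- `stem T` : the longest `s ∈ T` with `T = T↾s`. -/
noncomputable def stem (T : Tr) : Str :=
  Classical.epsilon fun s => s ∈ T ∧ restr T s = T ∧ ∀ t ∈ T, restr T t = T → t.length ≤ s.length

/-- The canonical witness `(r, q)` of an E0-large tree. -/
noncomputable def witness (T : Tr) : Str × (ℕ → Bool → Str) :=
  Classical.epsilon fun rq => LTwit T rq.1 rq.2

/-- Splitting levels computed from a witness: `spl_0 = |r|`, `spl_{n+1} = spl_n + |q^i_n|`. -/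
def splN (r : Str) (q : ℕ → Bool → Str) : ℕ → ℕ
  | 0 => r.length
  | n+1 => splN r q n + (q n false).length

/-- `spl T n`, the `n`-th splitting level of an E0-large tree `T`. -/
noncomputable def spl (T : Tr) (n : ℕ) : ℕ := splN (witness T).1 (witness T).2 n

/-- Simple splitting `T→i = T↾(stem(T)⌢i)`. -/
noncomputable def split1 (T : Tr) (i : Bool) : Tr := restr T (stem T ++ [i])

/-- Iterated splitting `T→s`: `T→Λ = T`, `T→(s⌢i) = (T→s)→i`. -/
noncomputable def splitS (T : Tr) (s : Str) : Tr := s.foldl split1 T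

/-- `S ⊆_n T` : `S ⊆ T` and `spl_k(S) = spl_k(T)` for all `k < n`. -/
def subN (n : ℕ) (S T : Tr) : Prop := S ⊆ T ∧ ∀ k < n, spl S k = spl T k

/-- A large-tree forcing notion: a set of E0-large trees closed under restriction
and under the action of strings. -/
def IsLTF (P : Set Tr) : Prop :=
  (∀ T ∈ P, IsLT T) ∧
  (∀ T ∈ P, ∀ u ∈ T, restr T u ∈ P) ∧
  (∀ T ∈ P, ∀ s : Str, actT s T ∈ P)

/-- `T` is an `n`-collage over `P`: `T ∈ LT` and `T→s ∈ P` for all `s ∈ 2^n`. -/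
def IsCollage (P : Set Tr) (n : ℕ) (T : Tr) : Prop :=
  IsLT T ∧ ∀ s : Str, s.length = n → splitS T s ∈ P

/-- `D` is open dense in `P` (as a set of trees). -/
def OpenDense1 (P D : Set Tr) : Prop :=
  D ⊆ P ∧ (∀ S ∈ P, ∃ T ∈ D, T ⊆ S) ∧ (∀ S ∈ P, ∀ T ∈ D, S ⊆ T → S ∈ D)

/-- `⟨T,T'⟩` is a condition of the conditional product `P ×_{E0} P`. -/
def CondPair (P : Set Tr) (p : Tr × Tr) : Prop :=
  p.1 ∈ P ∧ p.2 ∈ P ∧ ∃ s : Str, actT s p.1 = p.2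

/-- Componentwise order on pairs of trees: `p ≤ q`. -/
def pleq (p q : Tr × Tr) : Prop := p.1 ⊆ q.1 ∧ p.2 ⊆ q.2

/-- Compatibility of two conditions in `P ×_{E0} P`. -/
def Compat (P : Set Tr) (p q : Tr × Tr) : Prop :=
  ∃ r : Tr × Tr, CondPair P r ∧ pleq r p ∧ pleq r q

/-- `D` is pre-dense in `P ×_{E0} P`. -/
def PreDense2 (P : Set Tr) (D : Set (Tr × Tr)) : Prop :=
  ∀ p : Tr × Tr, CondPair P p → ∃ q ∈ D, Compat P p q

/-- `D` is open dense in `P ×_{E0} P`. -/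
def OpenDense2 (P : Set Tr) (D : Set (Tr × Tr)) : Prop :=
  D ⊆ {p | CondPair P p} ∧
  (∀ p : Tr × Tr, CondPair P p → ∃ q ∈ D, pleq q p) ∧
  (∀ p : Tr × Tr, CondPair P p → ∀ q ∈ D, pleq p q → p ∈ D)

/-- A `P ×_{E0} P`-real name `c = ⟨C_n^i⟩`. -/
def IsRealName (P : Set Tr) (c : ℕ → Bool → Set (Tr × Tr)) : Prop :=
  (∀ n : ℕ, ∀ i : Bool, c n i ⊆ {p | CondPair P p}) ∧
  (∀ n : ℕ, PreDense2 P (c n false ∪ c n true)) ∧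
  (∀ n : ℕ, ∀ p ∈ c n false, ∀ q ∈ c n true, ¬ Compat P p q)

/-- `p` directly forces `c(n) = i`. -/
def DFVal (c : ℕ → Bool → Set (Tr × Tr)) (p : Tr × Tr) (n : ℕ) (i : Bool) : Prop :=
  ∃ q ∈ c n i, pleq p q

/-- `p` directly forces `s ⊂ c`. -/
def DFPrefix (c : ℕ → Bool → Set (Tr × Tr)) (p : Tr × Tr) (s : Str) : Prop :=
  ∀ n < s.length, DFVal c p n (s.getD n false)

/-- `p` directly forces `c ∉ [U]`. -/
def DFAvoid (c : ℕ → Bool → Set (Tr × Tr)) (p : Tr × Tr) (U : Tr) : Prop :=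
  ∃ s : Str, s ∉ U ∧ DFPrefix c p s

/-- `p` directly forces `c ≠ d`: there are incomparable strings `s, t` such that
`p` directly forces `s ⊂ c` and `t ⊂ d`. -/
def DFNe (c d : ℕ → Bool → Set (Tr × Tr)) (p : Tr × Tr) : Prop :=
  ∃ s t : Str, ¬ s <+: t ∧ ¬ t <+: s ∧ DFPrefix c p s ∧ DFPrefix d p t

/-- The action `σ·c` of a string on a real name. -/
def actName (σ : Str) (c : ℕ → Bool → Set (Tr × Tr)) : ℕ → Bool → Set (Tr × Tr) :=
  fun n i => if σ.getD n false = true then c n (!i) else c n i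

/-- The name `π_left` of the left generic real. -/
def piLeft : ℕ → Bool → Set (Tr × Tr) := fun n i =>
  {p | ∃ s t : Str, s.length = n+1 ∧ t.length = n+1 ∧ s.getD n false = i ∧ p = (Tbr s, Tbr t)}

/-- The name `π_right` of the right generic real. -/
def piRight : ℕ → Bool → Set (Tr × Tr) := fun n i =>
  {p | ∃ s t : Str, s.length = n+1 ∧ t.length = n+1 ∧ t.getD n false = i ∧ p = (Tbr s, Tbr t)}

/-!
Acting by a string `σ` is a prefix-preserving bijection of `2^{<ω}` commuting with restriction,
so it carries the stem of a tree to the stem of its image and `σ·(T→a) = (σ·T)→(a + σ(|stem T|))`.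
Hence `σ·T = T'` gives `σ·(T→a) = T'→b` for one of the two values of `b`. For the other one,
compose `σ` with the string that vanishes on the stem of `T'` and equals `q^0_0 + q^1_0` on the
next block: it maps `T'` onto itself and exchanges `T'→0` and `T'→1`. Finally `T→a` and `T'→b`
are restrictions of trees in `P`, so they lie in `P`.
-/

theorem length_act (σ t : Str) : (act σ t).length = t.length := by simp [act]

theorem getElem_act (σ t : Str) (k : ℕ) (h : k < (act σ t).length) :
    (act σ t)[k] = Bool.xor (σ.getD k false) (t[k]'(by simpa [length_act] using h)) := by
  simp [act]

theorem act_eq_self {σ t : Str} (h : ∀ k < t.length, σ.getD k false = false) : act σ t = t :=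
  List.ext_getElem (length_act σ t) fun k hk _ => by
    rw [getElem_act, h k (by simpa [length_act] using hk), Bool.false_xor]

def xorStr (u v : Str) : Str :=
  List.ofFn fun k : Fin (max u.length v.length) => Bool.xor (u.getD k false) (v.getD k false)

theorem getD_xorStr (u v : Str) (k : ℕ) :
    (xorStr u v).getD k false = Bool.xor (u.getD k false) (v.getD k false) := by
  rcases lt_or_ge k (max u.length v.length) with h | h
  · rw [List.getD_eq_getElem _ _ (by simpa [xorStr] using h)]
    simp [xorStr]
  · rw [List.getD_eq_default _ _ (by simpa [xorStr] using h),
      List.getD_eq_default _ _ (le_of_max_le_left h), List.getD_eq_default _ _ (le_of_max_le_right h)]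
    rfl

theorem act_act (σ σ' t : Str) : act σ (act σ' t) = act (xorStr σ σ') t :=
  List.ext_getElem (by simp only [length_act]) fun k hk _ => by
    rw [getElem_act, getElem_act, getElem_act, getD_xorStr, Bool.xor_assoc]

theorem act_act_self (σ t : Str) : act σ (act σ t) = t := by
  rw [act_act]
  exact act_eq_self fun k _ => by rw [getD_xorStr, Bool.xor_self]

theorem act_injective (σ : Str) : Function.Injective (act σ) :=
  Function.LeftInverse.injective (act_act_self σ)

theorem act_xorStr_left {u v : Str} (h : u.length = v.length) : act (xorStr u v) u = v :=
  List.ext_getElem (by rw [length_act, h]) fun k hk hk' => by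
    have hku : k < u.length := by simpa [length_act] using hk
    rw [getElem_act, getD_xorStr, List.getD_eq_getElem _ _ hku, List.getD_eq_getElem _ _ hk',
      Bool.xor_right_comm, Bool.xor_self, Bool.false_xor]

theorem act_xorStr_right {u v : Str} (h : u.length = v.length) : act (xorStr u v) v = u :=
  List.ext_getElem (by rw [length_act, h]) fun k hk hk' => by
    have hkv : k < v.length := by simpa [length_act] using hk
    rw [getElem_act, getD_xorStr, List.getD_eq_getElem _ _ hk', List.getD_eq_getElem _ _ hkv,
      Bool.xor_assoc, Bool.xor_self, Bool.xor_false]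

theorem act_append (σ u v : Str) : act σ (u ++ v) = act σ u ++ act (σ.drop u.length) v := by
  refine List.ext_getElem (by simp only [length_act, List.length_append]) fun k _ _ => ?_
  rw [getElem_act]
  rcases lt_or_ge k u.length with hku | hku
  · rw [List.getElem_append_left hku,
      List.getElem_append_left (by simpa only [length_act] using hku), getElem_act]
  · rw [List.getElem_append_right hku,
      List.getElem_append_right (by simpa only [length_act] using hku), getElem_act,
      List.getD_eq_getElem?_getD, List.getD_eq_getElem?_getD,
      List.getElem?_drop]
    simp only [length_act, Nat.add_sub_cancel' hku]

theorem act_append_singleton (σ u : Str) (a : Bool) :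
    act σ (u ++ [a]) = act σ u ++ [Bool.xor (σ.getD u.length false) a] := by
  rw [act_append]
  simp [act, List.getD_eq_getElem?_getD, List.getElem?_drop]

theorem act_prefix {u v : Str} (σ : Str) (h : u <+: v) : act σ u <+: act σ v := by
  obtain ⟨w, rfl⟩ := h
  rw [act_append]
  exact List.prefix_append _ _

theorem act_prefix_act_iff {u v : Str} (σ : Str) : act σ u <+: act σ v ↔ u <+: v :=
  ⟨fun h => by simpa only [act_act_self] using act_prefix σ h, act_prefix σ⟩

theorem actT_actT (σ σ' : Str) (T : Tr) : actT σ (actT σ' T) = actT (xorStr σ σ') T := by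
  rw [actT, actT, ← Set.image_comp]
  exact Set.image_congr fun x _ => act_act σ σ' x

theorem actT_injective (σ : Str) : Function.Injective (actT σ) :=
  (act_injective σ).image_injective

theorem actT_restr (σ : Str) (T : Tr) (u : Str) :
    actT σ (restr T u) = restr (actT σ T) (act σ u) := by
  ext x
  constructor
  · rintro ⟨y, ⟨hy, hyu⟩, rfl⟩
    exact ⟨⟨y, hy, rfl⟩, by simpa only [act_prefix_act_iff] using hyu⟩
  · rintro ⟨⟨y, hy, rfl⟩, hyu⟩
    exact ⟨y, ⟨hy, by simpa only [act_prefix_act_iff] using hyu⟩, rfl⟩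

def IsStem (T : Tr) (s : Str) : Prop :=
  s ∈ T ∧ restr T s = T ∧ ∀ t ∈ T, restr T t = T → t.length ≤ s.length

theorem IsStem.eq {T : Tr} {s s' : Str} (h : IsStem T s) (h' : IsStem T s') : s = s' := by
  have hs's : s'.length ≤ s.length := h.2.2 s' h'.1 h'.2.1
  have hss' : s.length ≤ s'.length := h'.2.2 s h.1 h.2.1
  have hcomp : s' ∈ restr T s := by rw [h.2.1]; exact h'.1
  rcases hcomp.2 with hp | hp
  · exact hp.eq_of_length_le hs's
  · exact (hp.eq_of_length_le hss').symm

theorem IsStem.actT {T : Tr} {s : Str} (h : IsStem T s) (σ : Str) :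
    IsStem (actT σ T) (act σ s) := by
  obtain ⟨hmem, hres, hmax⟩ := h
  refine ⟨Set.mem_image_of_mem _ hmem, by rw [← actT_restr, hres], ?_⟩
  rintro _ ⟨t, ht, rfl⟩ hrt
  rw [← actT_restr] at hrt
  rw [length_act, length_act]
  exact hmax t ht (actT_injective σ hrt)

theorem IsStem.stem_eq {T : Tr} {s : Str} (h : IsStem T s) : stem T = s :=
  (Classical.epsilon_spec (p := IsStem T) ⟨s, h⟩).eq h

theorem length_le_of_restr_eq {T : Tr} {u x : Str} (h0 : u ++ [false] ∈ T)
    (h1 : u ++ [true] ∈ T) (hx : restr T x = T) : x.length ≤ u.length := by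
  by_contra! hlt
  have hpre : ∀ i : Bool, u ++ [i] ∈ T → u ++ [i] <+: x := fun i hi => by
    have hi' : u ++ [i] ∈ restr T x := by rw [hx]; exact hi
    rcases hi'.2 with hp | hp
    · rw [hp.eq_of_length_le (by simp; omega)]
    · exact hp
  have := List.prefix_of_prefix_length_le (hpre false h0) (hpre true h1) (by simp)
  simp at this

theorem actT_split1 {T : Tr} {s : Str} (h : IsStem T s) (σ : Str) (a : Bool) :
    actT σ (split1 T a) = split1 (actT σ T) (Bool.xor (σ.getD s.length false) a) := by
  rw [split1, split1, h.stem_eq, (h.actT σ).stem_eq, actT_restr, act_append_singleton]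

def swapStr (r : Str) (q : ℕ → Bool → Str) : Str :=
  List.replicate r.length false ++ xorStr (q 0 true) (q 0 false)

theorem flatten_map_range_succ (g : ℕ → Str) (n : ℕ) :
    ((List.range (n + 1)).map g).flatten = g 0 ++ ((List.range n).map (g ∘ Nat.succ)).flatten := by
  simp [List.range_succ_eq_map]

namespace LTwit

variable {T : Tr} {r : Str} {q : ℕ → Bool → Str}

theorem mem_iff (hw : LTwit T r q) {t : Str} :
    t ∈ T ↔ ∃ n : ℕ, ∃ f : ℕ → Bool,
      t <+: r ++ ((List.range (n + 1)).map fun k => q k (f k)).flatten := by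
  rw [hw.2.2]
  rfl

theorem exists_eq_cons (hw : LTwit T r q) (n : ℕ) (i : Bool) : ∃ l, q n i = i :: l := by
  have h := hw.2.1 n i
  rcases hq : q n i with _ | ⟨b, l⟩
  · simp [hq] at h
  · simp only [hq, List.head?_cons, Option.some.injEq] at h
    exact ⟨l, by rw [h]⟩

theorem length_eq (hw : LTwit T r q) (n : ℕ) (i : Bool) :
    (q n i).length = (q n false).length := by
  cases i
  · rfl
  · exact (hw.1 n).1

theorem append_singleton_mem (hw : LTwit T r q) (i : Bool) : r ++ [i] ∈ T := by
  obtain ⟨l, hl⟩ := hw.exists_eq_cons 0 i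
  exact hw.mem_iff.2 ⟨0, fun _ => i, by simp [hl]⟩

theorem isStem (hw : LTwit T r q) : IsStem T r := by
  refine ⟨hw.mem_iff.2 ⟨0, fun _ => false, List.prefix_append _ _⟩, ?_, fun x _ hx =>
    length_le_of_restr_eq (hw.append_singleton_mem false) (hw.append_singleton_mem true) hx⟩
  refine Set.Subset.antisymm (fun _ ht => ht.1) fun t ht => ⟨ht, ?_⟩
  obtain ⟨n, f, hp⟩ := hw.mem_iff.1 ht
  exact List.prefix_or_prefix_of_prefix (List.prefix_append _ _) hp

theorem getD_swapStr (hw : LTwit T r q) : (swapStr r q).getD r.length false = true := by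
  obtain ⟨l₀, h₀⟩ := hw.exists_eq_cons 0 false
  obtain ⟨l₁, h₁⟩ := hw.exists_eq_cons 0 true
  rw [swapStr, List.getD_append_right _ _ _ _ (by simp), List.length_replicate, Nat.sub_self,
    getD_xorStr, h₀, h₁]
  rfl

theorem act_swapStr_append (hw : LTwit T r q) (i : Bool) (w : Str) :
    act (swapStr r q) (r ++ (q 0 i ++ w)) = r ++ (q 0 (!i) ++ w) := by
  have hr : act (swapStr r q) r = r := act_eq_self fun k hk => by
    rw [swapStr, List.getD_append _ _ _ _ (by simpa), List.getD_replicate _ hk]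
  have hblock : act ((swapStr r q).drop r.length) (q 0 i) = q 0 (!i) := by
    rw [swapStr, List.drop_left' List.length_replicate]
    cases i
    · exact act_xorStr_right (hw.length_eq 0 true)
    · exact act_xorStr_left (hw.length_eq 0 true)
  have hrest : act (((swapStr r q).drop r.length).drop (q 0 i).length) w = w := by
    rw [List.drop_eq_nil_of_le (by simp [swapStr, xorStr, hw.length_eq 0 i, hw.length_eq 0 true])]
    exact act_eq_self fun _ _ => List.getD_nil
  rw [act_append, act_append, hr, hblock, hrest]

theorem act_swapStr_mem (hw : LTwit T r q) {x : Str} (hx : x ∈ T) : act (swapStr r q) x ∈ T := by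
  obtain ⟨n, f, hp⟩ := hw.mem_iff.1 hx
  refine hw.mem_iff.2 ⟨n, Function.update f 0 (!f 0), ?_⟩
  convert act_prefix (swapStr r q) hp using 1
  rw [flatten_map_range_succ, flatten_map_range_succ, hw.act_swapStr_append]
  simp [Function.comp_def]

theorem actT_swapStr (hw : LTwit T r q) : actT (swapStr r q) T = T :=
  Set.Subset.antisymm (Set.image_subset_iff.2 fun _ => hw.act_swapStr_mem)
    fun x hx => ⟨_, hw.act_swapStr_mem hx, act_act_self _ x⟩

end LTwit

theorem exists_actT_split1_eq {T T' : Tr} (hT : IsLT T) (hT' : IsLT T') {σ : Str}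
    (hσ : actT σ T = T') (a b : Bool) : ∃ σ', actT σ' (split1 T a) = split1 T' b := by
  obtain ⟨r, q, hw⟩ := hT
  obtain ⟨r', q', hw'⟩ := hT'
  set c := Bool.xor (σ.getD r.length false) a
  have hσa : actT σ (split1 T a) = split1 T' c := by rw [actT_split1 hw.isStem, hσ]
  by_cases hcb : c = b
  · exact ⟨σ, hcb ▸ hσa⟩
  · refine ⟨xorStr (swapStr r' q') σ, ?_⟩
    rw [← actT_actT, hσa, actT_split1 hw'.isStem, hw'.actT_swapStr, hw'.getD_swapStr,
      Bool.true_xor, Bool.not_eq.2 hcb]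

theorem split1_mem {P : Set Tr} (hP : IsLTF P) {T : Tr} (hT : T ∈ P) (a : Bool) :
    split1 T a ∈ P := by
  obtain ⟨r, q, hw⟩ := hP.1 T hT
  rw [split1, hw.isStem.stem_eq]
  exact hP.2.1 T hT _ (hw.append_singleton_mem a)

theorem condPair_split1 {P : Set Tr} (hP : IsLTF P) {T T' : Tr} (h : CondPair P (T, T'))
    (a b : Bool) : CondPair P (split1 T a, split1 T' b) := by
  obtain ⟨hT, hT', σ, hσ⟩ := h
  exact ⟨split1_mem hP hT a, split1_mem hP hT' b,
    exists_actT_split1_eq (hP.1 T hT) (hP.1 T' hT') hσ a b⟩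

theorem condPair_splitS {P : Set Tr} (hP : IsLTF P) {s t : Str} (hst : s.length = t.length)
    {T T' : Tr} (h : CondPair P (T, T')) : CondPair P (splitS T s, splitS T' t) := by
  induction s generalizing t T T' with
  | nil => rwa [List.eq_nil_of_length_eq_zero hst.symm]
  | cons a s ih =>
    obtain _ | ⟨b, t⟩ := t
    · simp at hst
    · exact ih (Nat.succ.inj hst) (condPair_split1 hP h a b)

/-- Lemma `dr`: if `P` is a large-tree forcing notion,
`⟨T,T'⟩ ∈ P ×_{E0} P`, and `s, t ∈ 2^n`, then `⟨T→s, T'→t⟩ ∈ P ×_{E0} P`. -/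
theorem stmt17 (P : Set Tr) (hP : IsLTF P) (T T' : Tr) (hTT' : CondPair P (T, T'))
    (n : ℕ) (s t : Str) (hs : s.length = n) (ht : t.length = n) :
    CondPair P (splitS T s, splitS T' t) :=
  condPair_splitS hP (hs.trans ht.symm) hTT'

end E0L
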